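/- arXiv:2205.10895 — 2 statements merged into one kernel-verified Lean document; each statement's English description precedes it below -/
import Mathlib

section
/- Let π₂ be a policy minimizing Ψ_α^2 over all policies, and suppose reg(π₂) > α. Then for every policy q: 2·(reg(q) − α) ≥ (reg(π₂) − α)·(1 + info(q)/info(π₂)); in particular 2·(reg(q) − α) ≥ reg(π₂) − α ≥ 0. -/
/-- A policy assigns to each context `s` a probability vector over the actions `A`. -/
structure Policy (S A : Type) [Fintype S] [Fintype A] where
  prob : S → A → ℝ
  nonneg : ∀ s a, 0 ≤ prob s a
  sum_eq_one : ∀ s, ∑ a, prob s a = 1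

/-- Expected one-step regret of a policy under context distribution `p`. -/
noncomputable def reg {S A : Type} [Fintype S] [Fintype A]
    (p : S → ℝ) (Δ : S → A → ℝ) (π : Policy S A) : ℝ :=
  ∑ s, p s * ∑ a, Δ s a * π.prob s a

/-- Expected information gain of a policy under context distribution `p`. -/
noncomputable def info {S A : Type} [Fintype S] [Fintype A]
    (p : S → ℝ) (I : S → A → ℝ) (π : Policy S A) : ℝ :=
  ∑ s, p s * ∑ a, I s a * π.prob s a

/-- The `(α, λ)`-marginal information ratio `Ψ_α^λ(π)`. -/
noncomputable def ratio {S A : Type} [Fintype S] [Fintype A]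
    (p : S → ℝ) (Δ I : S → A → ℝ) (α lam : ℝ) (π : Policy S A) : ℝ :=
  (max 0 (reg p Δ π - α)) ^ lam / info p I π

/-!
Mixing the minimizer `π₂` with any policy `q` in proportion `t` moves regret and information
affinely, so minimality gives `(r + t d)² N ≥ r² (N + t e)` for `t ∈ (0, 1]`, where
`r = reg π₂ - α`, `N = info π₂` and `d`, `e` are the increments of regret and information.
Expanding, the difference is `t (2 r d N - r² e) + t² d² N`; dividing by `t` and letting `t → 0⁺`
gives the first-order condition `r e ≤ 2 d N`, which rearranges to the claim.
-/

open Set Filter Topology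

lemma nonneg_of_forall_mem_Ioc_nonneg_add_mul {a b : ℝ}
    (h : ∀ t ∈ Ioc (0 : ℝ) 1, 0 ≤ a + t * b) : 0 ≤ a := by
  have hlim : Tendsto (fun t : ℝ => a + t * b) (𝓝[>] 0) (𝓝 a) := by
    have : Tendsto (fun t : ℝ => a + t * b) (𝓝 0) (𝓝 (a + 0 * b)) :=
      (continuous_const.add (continuous_id.mul continuous_const)).tendsto 0
    simpa using this.mono_left nhdsWithin_le_nhds
  exact ge_of_tendsto hlim (eventually_of_mem (Ioc_mem_nhdsGT one_pos) h)

lemma sq_mul_le_two_mul_of_forall_mem_Ioc {r d N e : ℝ}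
    (h : ∀ t ∈ Ioc (0 : ℝ) 1, r ^ 2 * (N + t * e) ≤ (r + t * d) ^ 2 * N) :
    r ^ 2 * e ≤ 2 * r * d * N := by
  suffices 0 ≤ 2 * r * d * N - r ^ 2 * e by linarith
  refine nonneg_of_forall_mem_Ioc_nonneg_add_mul (b := d ^ 2 * N) fun t ht => ?_
  exact nonneg_of_mul_nonneg_right (by linear_combination h t ht) ht.1

lemma max_zero_sq_le_sq (x : ℝ) : max 0 x ^ 2 ≤ x ^ 2 := by
  rcases le_total 0 x with hx | hx
  · rw [max_eq_right hx]
  · rw [max_eq_left hx, zero_pow two_ne_zero]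
    positivity

section Policies

variable {S A : Type} [Fintype S] [Fintype A]

noncomputable def Policy.mix (π q : Policy S A) (t : ℝ) (ht0 : 0 ≤ t) (ht1 : t ≤ 1) :
    Policy S A where
  prob s a := (1 - t) * π.prob s a + t * q.prob s a
  nonneg s a := add_nonneg (mul_nonneg (by linarith) (π.nonneg s a)) (mul_nonneg ht0 (q.nonneg s a))
  sum_eq_one s := by
    simp [Finset.sum_add_distrib, ← Finset.mul_sum, π.sum_eq_one s, q.sum_eq_one s]

lemma sum_mul_sum_mul_mix (p : S → ℝ) (f : S → A → ℝ) (π q : Policy S A) (t : ℝ)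
    (ht0 : 0 ≤ t) (ht1 : t ≤ 1) :
    ∑ s, p s * ∑ a, f s a * (π.mix q t ht0 ht1).prob s a
      = ∑ s, p s * ∑ a, f s a * π.prob s a
        + t * (∑ s, p s * ∑ a, f s a * q.prob s a - ∑ s, p s * ∑ a, f s a * π.prob s a) := by
  simp only [Policy.mix, mul_sub, Finset.mul_sum, ← Finset.sum_sub_distrib,
    ← Finset.sum_add_distrib]
  exact Finset.sum_congr rfl fun s _ => Finset.sum_congr rfl fun a _ => by ring

lemma reg_mix (p : S → ℝ) (Δ : S → A → ℝ) (π q : Policy S A) (t : ℝ) (ht0 : 0 ≤ t)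
    (ht1 : t ≤ 1) :
    reg p Δ (π.mix q t ht0 ht1) = reg p Δ π + t * (reg p Δ q - reg p Δ π) :=
  sum_mul_sum_mul_mix p Δ π q t ht0 ht1

lemma info_mix (p : S → ℝ) (I : S → A → ℝ) (π q : Policy S A) (t : ℝ) (ht0 : 0 ≤ t)
    (ht1 : t ≤ 1) :
    info p I (π.mix q t ht0 ht1) = info p I π + t * (info p I q - info p I π) :=
  sum_mul_sum_mul_mix p I π q t ht0 ht1

lemma info_pos {p : S → ℝ} (hp0 : ∀ s, 0 ≤ p s) (hpex : ∃ s, 0 < p s)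
    {I : S → A → ℝ} (hI : ∀ s a, 0 < I s a) (π : Policy S A) :
    0 < info p I π := by
  have hinner : ∀ s, 0 < ∑ a, I s a * π.prob s a := fun s => by
    obtain ⟨a, -, ha⟩ := Finset.exists_ne_zero_of_sum_ne_zero
      (by rw [π.sum_eq_one s]; exact one_ne_zero : ∑ a, π.prob s a ≠ 0)
    exact Finset.sum_pos' (fun a _ => mul_nonneg (hI s a).le (π.nonneg s a))
      ⟨a, Finset.mem_univ a, mul_pos (hI s a) ((π.nonneg s a).lt_of_ne' ha)⟩
  obtain ⟨s, hs⟩ := hpex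
  exact Finset.sum_pos' (fun s _ => mul_nonneg (hp0 s) (hinner s).le)
    ⟨s, Finset.mem_univ s, mul_pos hs (hinner s)⟩

lemma ratio_two_eq (p : S → ℝ) (Δ I : S → A → ℝ) (α : ℝ) (π : Policy S A) :
    ratio p Δ I α 2 π = max 0 (reg p Δ π - α) ^ 2 / info p I π := by
  rw [ratio, Real.rpow_two]

lemma sq_mul_info_mix_le {p : S → ℝ} (hp0 : ∀ s, 0 ≤ p s) (hpex : ∃ s, 0 < p s)
    {Δ I : S → A → ℝ} (hI : ∀ s a, 0 < I s a) {α : ℝ} {π₂ : Policy S A}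
    (hmin : ∀ q : Policy S A, ratio p Δ I α 2 π₂ ≤ ratio p Δ I α 2 q)
    (hreg : α < reg p Δ π₂) (q : Policy S A) (t : ℝ) (ht0 : 0 ≤ t) (ht1 : t ≤ 1) :
    (reg p Δ π₂ - α) ^ 2 * info p I (π₂.mix q t ht0 ht1)
      ≤ (reg p Δ (π₂.mix q t ht0 ht1) - α) ^ 2 * info p I π₂ := by
  have h := hmin (π₂.mix q t ht0 ht1)
  rw [ratio_two_eq, ratio_two_eq, max_eq_right (sub_pos.2 hreg).le,
    div_le_div_iff₀ (info_pos hp0 hpex hI _) (info_pos hp0 hpex hI _)] at h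
  exact h.trans (mul_le_mul_of_nonneg_right (max_zero_sq_le_sq _) (info_pos hp0 hpex hI _).le)

end Policies

theorem stmt_1_general {S A : Type} [Fintype S] [Fintype A]
    (p : S → ℝ) (hp0 : ∀ s, 0 ≤ p s) (hpex : ∃ s, 0 < p s)
    (Δ I : S → A → ℝ) (hI : ∀ s a, 0 < I s a)
    (α : ℝ)
    (π₂ : Policy S A)
    (hmin : ∀ q : Policy S A, ratio p Δ I α 2 π₂ ≤ ratio p Δ I α 2 q)
    (hreg : α < reg p Δ π₂) :
    ∀ q : Policy S A,
      (reg p Δ π₂ - α) * (1 + info p I q / info p I π₂) ≤ 2 * (reg p Δ q - α) ∧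
      reg p Δ π₂ - α ≤ 2 * (reg p Δ q - α) ∧
      0 ≤ reg p Δ π₂ - α := by
  intro q
  have hr : 0 < reg p Δ π₂ - α := sub_pos.2 hreg
  have hN₂ : 0 < info p I π₂ := info_pos hp0 hpex hI π₂
  have hNq : 0 < info p I q := info_pos hp0 hpex hI q
  have hfoc : (reg p Δ π₂ - α) ^ 2 * (info p I q - info p I π₂)
      ≤ 2 * (reg p Δ π₂ - α) * (reg p Δ q - reg p Δ π₂) * info p I π₂ :=
    sq_mul_le_two_mul_of_forall_mem_Ioc fun t ht => by
      have h := sq_mul_info_mix_le hp0 hpex hI hmin hreg q t ht.1.le ht.2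
      rwa [reg_mix, info_mix, add_sub_right_comm] at h
  have hfoc' : (reg p Δ π₂ - α) * (info p I q - info p I π₂)
      ≤ 2 * (reg p Δ q - reg p Δ π₂) * info p I π₂ :=
    (mul_le_mul_iff_of_pos_left hr).1 (by linear_combination hfoc)
  have hmain : (reg p Δ π₂ - α) * (1 + info p I q / info p I π₂) ≤ 2 * (reg p Δ q - α) := by
    rw [one_add_div hN₂.ne', mul_div_assoc', div_le_iff₀ hN₂]
    linarith
  have hgain : reg p Δ π₂ - α ≤ (reg p Δ π₂ - α) * (1 + info p I q / info p I π₂) :=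
    le_mul_of_one_le_right hr.le (le_add_of_nonneg_right (div_pos hNq hN₂).le)
  exact ⟨hmain, hgain.trans hmain, hr.le⟩

/-- First-order optimality consequence for a minimizer `π₂` of the squared marginal
information ratio: if `reg(π₂) > α` then for every policy `q`,
`2·(reg(q) − α) ≥ (reg(π₂) − α)·(1 + info(q)/info(π₂))`; in particular
`2·(reg(q) − α) ≥ reg(π₂) − α ≥ 0`. -/
theorem stmt_1 {S A : Type} [Fintype S] [Fintype A] [Nonempty S] [Nonempty A]
    (p : S → ℝ) (hp0 : ∀ s, 0 ≤ p s) (hp1 : ∑ s, p s = 1) (hpex : ∃ s, 0 < p s)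
    (Δ I : S → A → ℝ) (hΔ : ∀ s a, 0 ≤ Δ s a) (hI : ∀ s a, 0 < I s a)
    (α : ℝ) (hα : 0 ≤ α)
    (π₂ : Policy S A)
    (hmin : ∀ q : Policy S A, ratio p Δ I α 2 π₂ ≤ ratio p Δ I α 2 q)
    (hreg : α < reg p Δ π₂) :
    ∀ q : Policy S A,
      (reg p Δ π₂ - α) * (1 + info p I q / info p I π₂) ≤ 2 * (reg p Δ q - α) ∧
      reg p Δ π₂ - α ≤ 2 * (reg p Δ q - α) ∧
      0 ≤ reg p Δ π₂ - α :=
  stmt_1_general p hp0 hpex Δ I hI α π₂ hmin hreg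
end

section
/- Let d ≥ 1 and work in ℝ^{d+1}. Let H = { x ∈ ℝ^{d+1} : x_j ∈ {−1,1} for all j ∈ {1,…,d} and x_{d+1} = 1 }, let the context-1 action (feature) set be {0} ∪ H where 0 is the zero vector, and let the context-2 action (feature) set B be any nonempty finite set of vectors in ℝ^{d+1} whose (d+1)-th coordinate equals 0. Suppose each of the two contexts arrives with probability 1/2, and for a policy π (assigning to context m ∈ {1,2} a probability distribution π(m) on that context's feature set) let M(π) = (1/2)·E_{x∼π(1)}[x xᵀ] + (1/2)·E_{x∼π(2)}[x xᵀ]. Then: (a) for every policy π, the minimum eigenvalue of M(π) is at most 1/2 (witnessed by the unit vector e_{d+1}); and (b) the policy with π(1) uniform on H (and π(2) arbitrary) satisfies vᵀ M(π) v ≥ (1/2)‖v‖² for all v ∈ ℝ^{d+1}, so its minimum eigenvalue is at least 1/2. Hence the explorability constant max_π σ_min(M(π)) equals 1/2. -/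
/-!
Along `e_{d+1}` only context 1 contributes, and there only through `H`, whose actions all have
last coordinate `1`; hence `e_{d+1}ᵀ M(π) e_{d+1} ≤ 1/2` for every policy. Conversely, a uniform
point of `H` has independent uniform signs in its first `d` coordinates and `1` in the last, so
`E_H[x xᵀ] = I`, and sampling uniformly from `H` in context 1 gives `M(π) ⪰ I/2`.
-/

open Matrix

/-- The smallest value of the Rayleigh quotient `vᵀ M v` over unit vectors; for a real
symmetric matrix this is the minimum eigenvalue `σ_min(M)`. -/
noncomputable def minEig {n : ℕ} (M : Matrix (Fin n) (Fin n) ℝ) : ℝ :=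
  sInf { r : ℝ | ∃ v : Fin n → ℝ, (∑ i, v i ^ 2) = 1 ∧ r = v ⬝ᵥ M.mulVec v }

/-- The informative action set
`H = { x ∈ ℝ^{d+1} : x_j ∈ {−1,1} for j ∈ {1,…,d}, x_{d+1} = 1 }`. -/
noncomputable def Hset (d : ℕ) : Finset (Fin (d + 1) → ℝ) :=
  Fintype.piFinset fun j => if (j : ℕ) < d then ({-1, 1} : Finset ℝ) else ({1} : Finset ℝ)

/-- `p` is a probability distribution supported on the finite set `s`. -/
def IsDistOn {α : Type} (s : Finset α) (p : α → ℝ) : Prop :=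
  (∀ x, 0 ≤ p x) ∧ (∑ x ∈ s, p x = 1) ∧ ∀ x ∉ s, p x = 0

/-- Expected outer-product matrix of a policy over the two equiprobable contexts:
context 1 has feature set `{0} ∪ H`, context 2 has feature set `B`. -/
noncomputable def covMat (d : ℕ) (B : Finset (Fin (d + 1) → ℝ))
    (p1 p2 : (Fin (d + 1) → ℝ) → ℝ) : Matrix (Fin (d + 1)) (Fin (d + 1)) ℝ :=
  (1 / 2 : ℝ) • (∑ x ∈ insert 0 (Hset d), p1 x • vecMulVec x x) +
  (1 / 2 : ℝ) • (∑ x ∈ B, p2 x • vecMulVec x x)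

section QuadraticForm

variable {n : Type*} [Fintype n]

lemma dotProduct_vecMulVec_self_mulVec (x v : n → ℝ) :
    v ⬝ᵥ vecMulVec x x *ᵥ v = (x ⬝ᵥ v) ^ 2 := by
  rw [vecMulVec_mulVec, op_smul_eq_smul, dotProduct_smul, smul_eq_mul, dotProduct_comm, sq]

lemma dotProduct_sum_smul_vecMulVec_mulVec {α : Type*} (s : Finset α) (p : α → ℝ)
    (x : α → n → ℝ) (v : n → ℝ) :
    v ⬝ᵥ (∑ a ∈ s, p a • vecMulVec (x a) (x a)) *ᵥ v = ∑ a ∈ s, p a * (x a ⬝ᵥ v) ^ 2 := by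
  simp only [sum_mulVec, dotProduct_sum, smul_mulVec, dotProduct_smul, smul_eq_mul,
    dotProduct_vecMulVec_self_mulVec]

lemma dotProduct_sum_smul_vecMulVec_mulVec_nonneg {α : Type*} (s : Finset α) {p : α → ℝ}
    (hp : ∀ a, 0 ≤ p a) (x : α → n → ℝ) (v : n → ℝ) :
    0 ≤ v ⬝ᵥ (∑ a ∈ s, p a • vecMulVec (x a) (x a)) *ᵥ v := by
  rw [dotProduct_sum_smul_vecMulVec_mulVec]
  exact Finset.sum_nonneg fun a _ => mul_nonneg (hp a) (sq_nonneg _)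

end QuadraticForm

section MinEig

variable {n : ℕ} {M : Matrix (Fin n) (Fin n) ℝ}

lemma minEig_le (hM : ∀ v, 0 ≤ v ⬝ᵥ M *ᵥ v) {v : Fin n → ℝ} (hv : ∑ i, v i ^ 2 = 1) :
    minEig M ≤ v ⬝ᵥ M *ᵥ v :=
  csInf_le ⟨0, by rintro r ⟨w, -, rfl⟩; exact hM w⟩ ⟨v, hv, rfl⟩

lemma le_minEig [NeZero n] {c : ℝ} (hM : ∀ v, c * ∑ i, v i ^ 2 ≤ v ⬝ᵥ M *ᵥ v) :
    c ≤ minEig M := by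
  refine le_csInf ⟨_, Pi.single 0 1, by simp [Pi.single_apply], rfl⟩ ?_
  rintro r ⟨v, hv, rfl⟩
  simpa [hv] using hM v

end MinEig

section IsDistOn

variable {α : Type} {s t : Finset α} {p : α → ℝ}

lemma IsDistOn.mono (hp : IsDistOn s p) (hst : s ⊆ t) : IsDistOn t p := by
  obtain ⟨hp_nonneg, hp_sum, hp_zero⟩ := hp
  refine ⟨hp_nonneg, ?_, fun x hx => hp_zero x fun hxs => hx (hst hxs)⟩
  rwa [← Finset.sum_subset hst fun x _ hxs => hp_zero x hxs]

lemma isDistOn_uniform [DecidableEq α] (hs : s.Nonempty) :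
    IsDistOn s (fun x => if x ∈ s then 1 / (s.card : ℝ) else 0) := by
  have hcard : (s.card : ℝ) ≠ 0 := by exact_mod_cast hs.card_pos.ne'
  refine ⟨fun x => ite_nonneg (by positivity) le_rfl, ?_, fun x hx => if_neg hx⟩
  rw [Finset.sum_ite_mem, Finset.inter_self, Finset.sum_const, nsmul_eq_mul]
  field_simp

end IsDistOn

section Hset

variable {d : ℕ} {x : Fin (d + 1) → ℝ}

lemma Hset_apply_last (hx : x ∈ Hset d) : x (Fin.last d) = 1 := by
  simpa [Hset] using Fintype.mem_piFinset.1 hx (Fin.last d)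

lemma Hset_apply_mul_self (hx : x ∈ Hset d) (i : Fin (d + 1)) : x i * x i = 1 := by
  have hi := Fintype.mem_piFinset.1 hx i
  split_ifs at hi <;> simp only [Finset.mem_insert, Finset.mem_singleton] at hi
  · rcases hi with h | h <;> simp [h]
  · simp [hi]

lemma zero_notMem_Hset : (0 : Fin (d + 1) → ℝ) ∉ Hset d := fun h => by
  simpa using Hset_apply_last h

lemma one_mem_Hset : (1 : Fin (d + 1) → ℝ) ∈ Hset d :=
  Fintype.mem_piFinset.2 fun j => by split_ifs <;> simp

lemma Hset_nonempty : (Hset d).Nonempty := ⟨1, one_mem_Hset⟩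

lemma update_neg_mem_Hset {k : Fin (d + 1)} (hk : (k : ℕ) < d) (hx : x ∈ Hset d) :
    Function.update x k (-x k) ∈ Hset d := by
  refine Fintype.mem_piFinset.2 fun j => ?_
  rcases eq_or_ne j k with rfl | hjk
  · have hj := Fintype.mem_piFinset.1 hx j
    simp only [if_pos hk, Finset.mem_insert, Finset.mem_singleton, Function.update_self] at hj ⊢
    rcases hj with h | h <;> simp [h]
  · simpa [Function.update_of_ne hjk] using Fintype.mem_piFinset.1 hx j

/-- Flipping the sign of a free coordinate `k ∈ {i, j}` is an involution of `H` that negates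
`x i * x j`. -/
lemma sum_Hset_apply_mul_apply {i j : Fin (d + 1)} (hij : i ≠ j) :
    ∑ x ∈ Hset d, x i * x j = 0 := by
  obtain ⟨k, hk, hflip⟩ : ∃ k : Fin (d + 1), (k : ℕ) < d ∧ ∀ y : Fin (d + 1) → ℝ,
      Function.update y k (-y k) i * Function.update y k (-y k) j = -(y i * y j) := by
    rcases eq_or_ne i (Fin.last d) with rfl | hi
    · refine ⟨j, by simpa using Fin.val_lt_last hij.symm, fun y => ?_⟩
      simp [Function.update_of_ne hij]
    · refine ⟨i, by simpa using Fin.val_lt_last hi, fun y => ?_⟩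
      simp [Function.update_of_ne hij.symm]
  have hinv : ∀ y : Fin (d + 1) → ℝ,
      Function.update (Function.update y k (-y k)) k (-(Function.update y k (-y k)) k) = y :=
    fun y => by simp
  have hsum : ∑ x ∈ Hset d, x i * x j = ∑ x ∈ Hset d, -(x i * x j) :=
    Finset.sum_nbij' _ _ (fun y hy => update_neg_mem_Hset hk hy)
      (fun y hy => update_neg_mem_Hset hk hy) (fun y _ => hinv y) (fun y _ => hinv y)
      (fun y _ => by rw [hflip, neg_neg])
  rw [Finset.sum_neg_distrib] at hsum
  linarith

lemma sum_Hset_vecMulVec : ∑ x ∈ Hset d, vecMulVec x x = ((Hset d).card : ℝ) • 1 := by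
  ext i j
  simp only [Matrix.sum_apply, vecMulVec_apply, Matrix.smul_apply, Matrix.one_apply, smul_eq_mul]
  split_ifs with hij
  · subst hij
    simp [Finset.sum_congr rfl fun x hx => Hset_apply_mul_self hx i]
  · simp [sum_Hset_apply_mul_apply hij]

end Hset

section covMat

variable {d : ℕ} {B : Finset (Fin (d + 1) → ℝ)} {p1 p2 : (Fin (d + 1) → ℝ) → ℝ}

lemma dotProduct_covMat_mulVec (v : Fin (d + 1) → ℝ) :
    v ⬝ᵥ covMat d B p1 p2 *ᵥ v =
      1 / 2 * ∑ x ∈ insert 0 (Hset d), p1 x * (x ⬝ᵥ v) ^ 2 +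
      1 / 2 * ∑ x ∈ B, p2 x * (x ⬝ᵥ v) ^ 2 := by
  rw [covMat, add_mulVec, dotProduct_add, smul_mulVec, smul_mulVec, dotProduct_smul,
    dotProduct_smul, dotProduct_sum_smul_vecMulVec_mulVec, dotProduct_sum_smul_vecMulVec_mulVec,
    smul_eq_mul, smul_eq_mul]

lemma dotProduct_covMat_mulVec_nonneg (hp1 : ∀ x, 0 ≤ p1 x) (hp2 : ∀ x, 0 ≤ p2 x)
    (v : Fin (d + 1) → ℝ) : 0 ≤ v ⬝ᵥ covMat d B p1 p2 *ᵥ v := by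
  rw [dotProduct_covMat_mulVec]
  have h1 := Finset.sum_nonneg fun x (_ : x ∈ insert 0 (Hset d)) =>
    mul_nonneg (hp1 x) (sq_nonneg (x ⬝ᵥ v))
  have h2 := Finset.sum_nonneg fun x (_ : x ∈ B) => mul_nonneg (hp2 x) (sq_nonneg (x ⬝ᵥ v))
  positivity

lemma single_last_dotProduct_covMat_mulVec_le (hp1 : IsDistOn (insert 0 (Hset d)) p1)
    (hB : ∀ x ∈ B, x (Fin.last d) = 0) :
    Pi.single (Fin.last d) 1 ⬝ᵥ covMat d B p1 p2 *ᵥ Pi.single (Fin.last d) 1 ≤ 1 / 2 := by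
  have hcontext1 : ∑ x ∈ insert 0 (Hset d), p1 x * x (Fin.last d) ^ 2 ≤ 1 :=
    calc ∑ x ∈ insert 0 (Hset d), p1 x * x (Fin.last d) ^ 2
        ≤ ∑ x ∈ insert 0 (Hset d), p1 x := by
          refine Finset.sum_le_sum fun x hx => ?_
          rcases Finset.mem_insert.1 hx with rfl | hx
          · simpa using hp1.1 0
          · simp [Hset_apply_last hx]
      _ = 1 := hp1.2.1
  have hcontext2 : ∑ x ∈ B, p2 x * x (Fin.last d) ^ 2 = 0 :=
    Finset.sum_eq_zero fun x hx => by simp [hB x hx]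
  simp only [dotProduct_covMat_mulVec, dotProduct_single_one, hcontext2]
  linarith

lemma sum_uniform_Hset_smul_vecMulVec :
    ∑ x ∈ insert 0 (Hset d), (if x ∈ Hset d then 1 / ((Hset d).card : ℝ) else 0) •
      vecMulVec x x = 1 := by
  have hcard : ((Hset d).card : ℝ) ≠ 0 := by exact_mod_cast Hset_nonempty.card_pos.ne'
  rw [Finset.sum_insert zero_notMem_Hset, if_neg zero_notMem_Hset, zero_smul, zero_add,
    Finset.sum_congr rfl fun x hx => by rw [if_pos hx], ← Finset.smul_sum, sum_Hset_vecMulVec,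
    smul_smul, one_div_mul_cancel hcard, one_smul]

lemma half_sum_sq_le_dotProduct_covMat_uniform_mulVec (hp2 : ∀ x, 0 ≤ p2 x)
    (v : Fin (d + 1) → ℝ) :
    1 / 2 * ∑ i, v i ^ 2 ≤ v ⬝ᵥ covMat d B
      (fun x => if x ∈ Hset d then 1 / ((Hset d).card : ℝ) else 0) p2 *ᵥ v := by
  have hcontext2 := dotProduct_sum_smul_vecMulVec_mulVec_nonneg B hp2 id v
  rw [covMat, sum_uniform_Hset_smul_vecMulVec, add_mulVec, dotProduct_add, smul_mulVec,
    smul_mulVec, dotProduct_smul, dotProduct_smul, one_mulVec, smul_eq_mul, smul_eq_mul]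
  simp only [id] at hcontext2
  have hv : v ⬝ᵥ v = ∑ i, v i ^ 2 := by simp only [dotProduct, sq]
  linarith

end covMat

theorem stmt_9_general (d : ℕ)
    (B : Finset (Fin (d + 1) → ℝ)) (hBne : B.Nonempty)
    (hB : ∀ x ∈ B, x (Fin.last d) = 0) :
    (∀ p1 p2 : (Fin (d + 1) → ℝ) → ℝ,
      IsDistOn (insert 0 (Hset d)) p1 → IsDistOn B p2 →
        (Pi.single (Fin.last d) (1 : ℝ)) ⬝ᵥ
            (covMat d B p1 p2).mulVec (Pi.single (Fin.last d) (1 : ℝ)) ≤ 1 / 2 ∧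
        minEig (covMat d B p1 p2) ≤ 1 / 2) ∧
    (∀ p2 : (Fin (d + 1) → ℝ) → ℝ, IsDistOn B p2 →
      (∀ v : Fin (d + 1) → ℝ,
        (1 / 2 : ℝ) * ∑ i, v i ^ 2 ≤
          v ⬝ᵥ (covMat d B
            (fun x => if x ∈ Hset d then (1 / ((Hset d).card : ℝ)) else 0) p2).mulVec v) ∧
      (1 / 2 : ℝ) ≤ minEig (covMat d B
            (fun x => if x ∈ Hset d then (1 / ((Hset d).card : ℝ)) else 0) p2)) ∧
    sSup { r : ℝ | ∃ p1 p2 : (Fin (d + 1) → ℝ) → ℝ,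
        IsDistOn (insert 0 (Hset d)) p1 ∧ IsDistOn B p2 ∧
        r = minEig (covMat d B p1 p2) } = 1 / 2 := by
  have upper : ∀ p1 p2 : (Fin (d + 1) → ℝ) → ℝ,
      IsDistOn (insert 0 (Hset d)) p1 → IsDistOn B p2 →
        Pi.single (Fin.last d) 1 ⬝ᵥ covMat d B p1 p2 *ᵥ Pi.single (Fin.last d) 1 ≤ 1 / 2 ∧
        minEig (covMat d B p1 p2) ≤ 1 / 2 := fun p1 p2 hp1 hp2 =>
    have he := single_last_dotProduct_covMat_mulVec_le (p2 := p2) hp1 hB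
    ⟨he, (minEig_le (dotProduct_covMat_mulVec_nonneg hp1.1 hp2.1)
      (by simp [Pi.single_apply])).trans he⟩
  have lower : ∀ p2 : (Fin (d + 1) → ℝ) → ℝ, IsDistOn B p2 →
      (∀ v : Fin (d + 1) → ℝ, 1 / 2 * ∑ i, v i ^ 2 ≤ v ⬝ᵥ covMat d B
        (fun x => if x ∈ Hset d then 1 / ((Hset d).card : ℝ) else 0) p2 *ᵥ v) ∧
      1 / 2 ≤ minEig (covMat d B
        (fun x => if x ∈ Hset d then 1 / ((Hset d).card : ℝ) else 0) p2) := fun p2 hp2 =>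
    ⟨half_sum_sq_le_dotProduct_covMat_uniform_mulVec hp2.1,
      le_minEig (half_sum_sq_le_dotProduct_covMat_uniform_mulVec hp2.1)⟩
  have hpH := (isDistOn_uniform (Hset_nonempty (d := d))).mono (Finset.subset_insert 0 _)
  have hpB := isDistOn_uniform hBne
  refine ⟨upper, lower, IsGreatest.csSup_eq ⟨?_, ?_⟩⟩
  · exact ⟨_, _, hpH, hpB, le_antisymm (lower _ hpB).2 (upper _ _ hpH hpB).2⟩
  · rintro r ⟨p1, p2, hp1, hp2, rfl⟩
    exact (upper p1 p2 hp1 hp2).2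

/-- Verification, inside the proof of Theorem 6.1, that the constructed two-context
sparse linear contextual bandit instance has explorability constant exactly `1/2`:
(a) every policy has `σ_min(M(π)) ≤ 1/2`, witnessed by the unit vector `e_{d+1}`;
(b) the policy uniform on `H` in context 1 satisfies `vᵀ M v ≥ ‖v‖²/2` for all `v`, so
`σ_min ≥ 1/2`; (c) hence `max_π σ_min(M(π)) = 1/2`. -/
theorem stmt_9 (d : ℕ) (hd : 1 ≤ d)
    (B : Finset (Fin (d + 1) → ℝ)) (hBne : B.Nonempty)
    (hB : ∀ x ∈ B, x (Fin.last d) = 0) :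
    (∀ p1 p2 : (Fin (d + 1) → ℝ) → ℝ,
      IsDistOn (insert 0 (Hset d)) p1 → IsDistOn B p2 →
        (Pi.single (Fin.last d) (1 : ℝ)) ⬝ᵥ
            (covMat d B p1 p2).mulVec (Pi.single (Fin.last d) (1 : ℝ)) ≤ 1 / 2 ∧
        minEig (covMat d B p1 p2) ≤ 1 / 2) ∧
    (∀ p2 : (Fin (d + 1) → ℝ) → ℝ, IsDistOn B p2 →
      (∀ v : Fin (d + 1) → ℝ,
        (1 / 2 : ℝ) * ∑ i, v i ^ 2 ≤
          v ⬝ᵥ (covMat d B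
            (fun x => if x ∈ Hset d then (1 / ((Hset d).card : ℝ)) else 0) p2).mulVec v) ∧
      (1 / 2 : ℝ) ≤ minEig (covMat d B
            (fun x => if x ∈ Hset d then (1 / ((Hset d).card : ℝ)) else 0) p2)) ∧
    sSup { r : ℝ | ∃ p1 p2 : (Fin (d + 1) → ℝ) → ℝ,
        IsDistOn (insert 0 (Hset d)) p1 ∧ IsDistOn B p2 ∧
        r = minEig (covMat d B p1 p2) } = 1 / 2 :=
  stmt_9_general d B hBne hB
end
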